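/- arXiv:1610.00836 — 3 statements merged into one kernel-verified Lean document; each statement's English description precedes it below -/
import Mathlib

section
/- Let m > 0, n ≥ 2 an integer, and s₀ the unique positive solution of 1 + s₀² − m·s₀^{1−n} = 0. Let r₀ ∈ ℝ, a > s₀, and let λ be a maximal solution of the ordinary differential equation λ'(r) = √(1 + λ(r)² − m·λ(r)^{1−n}) with λ(r₀) = a. Then λ is defined on all of [r₀, ∞), λ is strictly increasing on [r₀, ∞), λ(r) → ∞ as r → ∞, and the limit lim_{r→∞} λ(r)·e^{−r} exists and is a positive real number. -/
/-!
Separation of variables. Let `f s = 1 + s² - m s^(1-n)` and `T x = ∫ₐˣ ds / √(f s)`. Every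
solution with `λ r₀ = a` satisfies `T (λ r) = r - r₀`. Since `f` is increasing, `f > 0` beyond
`s₀`, and `f s = s² + O(1)`, the integrand is `1/s + O(1/s²)`, so `log x - T x` converges to some
`l`; hence `T` is an increasing bijection of `ℝ`, `r ↦ T⁻¹ (r - r₀)` is a solution on all of
`[r₀, ∞)`, maximality forces `J = [r₀, ∞)`, and `λ r e^(-r) = exp (log λ - T λ - r₀) → e^(l - r₀)`.
-/

open Filter Set Real Topology MeasureTheory

/-- Freezing the speed at `v a` below `a` makes the integrand continuous on all of `ℝ`;
only `x ≥ a` matters for solutions starting at `a`. -/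
noncomputable def travelTime (v : ℝ → ℝ) (a x : ℝ) : ℝ :=
  ∫ s in a..x, (v (max s a))⁻¹

section TravelTime

variable {v : ℝ → ℝ} {a : ℝ}

@[simp]
lemma travelTime_self : travelTime v a a = 0 :=
  intervalIntegral.integral_same

lemma continuous_inv_comp_max (hv : ContinuousOn v (Ici a)) (hv_pos : ∀ x ∈ Ici a, 0 < v x) :
    Continuous fun s => (v (max s a))⁻¹ :=
  (hv.comp_continuous (continuous_id.max continuous_const) fun s => le_max_right s a).inv₀
    fun s => (hv_pos _ (le_max_right s a)).ne'

lemma hasDerivAt_travelTime (hv : ContinuousOn v (Ici a)) (hv_pos : ∀ x ∈ Ici a, 0 < v x)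
    (x : ℝ) : HasDerivAt (travelTime v a) (v (max x a))⁻¹ x :=
  have hφ := continuous_inv_comp_max hv hv_pos
  intervalIntegral.integral_hasDerivAt_right (hφ.intervalIntegrable _ _)
    (hφ.stronglyMeasurableAtFilter _ _) hφ.continuousAt

lemma strictMono_travelTime (hv : ContinuousOn v (Ici a)) (hv_pos : ∀ x ∈ Ici a, 0 < v x) :
    StrictMono (travelTime v a) :=
  strictMono_of_hasDerivAt_pos (hasDerivAt_travelTime hv hv_pos) fun x =>
    inv_pos.2 (hv_pos _ (le_max_right x a))

lemma travelTime_of_le {x : ℝ} (hx : x ≤ a) : travelTime v a x = (x - a) * (v a)⁻¹ := by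
  rw [travelTime, intervalIntegral.integral_congr (g := fun _ => (v a)⁻¹),
    intervalIntegral.integral_const, smul_eq_mul]
  intro s hs
  rw [uIcc_of_ge hx] at hs
  simp only [max_eq_right hs.2]

lemma tendsto_travelTime_atBot (hva : 0 < v a) : Tendsto (travelTime v a) atBot atBot := by
  have hlin : Tendsto (fun x => (x - a) * (v a)⁻¹) atBot atBot :=
    (tendsto_atBot_add_const_right _ (-a) tendsto_id).atBot_mul_const (inv_pos.2 hva)
  exact hlin.congr' ((eventually_le_atBot a).mono fun x hx => (travelTime_of_le hx).symm)

lemma exists_orderIso_travelTime (hv : ContinuousOn v (Ici a))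
    (hv_pos : ∀ x ∈ Ici a, 0 < v x) (htop : Tendsto (travelTime v a) atTop atTop) :
    ∃ E : ℝ ≃o ℝ, ⇑E = travelTime v a := by
  have hcont : Continuous (travelTime v a) :=
    continuous_iff_continuousAt.2 fun x => (hasDerivAt_travelTime hv hv_pos x).continuousAt
  have hsurj := hcont.surjective htop (tendsto_travelTime_atBot (hv_pos a self_mem_Ici))
  exact ⟨StrictMono.orderIsoOfSurjective _ (strictMono_travelTime hv hv_pos) hsurj, rfl⟩

lemma hasDerivAt_symm_of_coe_eq_travelTime (hv : ContinuousOn v (Ici a))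
    (hv_pos : ∀ x ∈ Ici a, 0 < v x) {E : ℝ ≃o ℝ} (hE : ⇑E = travelTime v a) {t : ℝ}
    (ht : 0 ≤ t) : HasDerivAt E.symm (v (E.symm t)) t := by
  have hEa : E a = 0 := by rw [hE, travelTime_self]
  have hta : a ≤ E.symm t := by rw [← E.symm_apply_apply a, hEa]; exact E.symm.monotone ht
  have hF := hasDerivAt_travelTime hv hv_pos (E.symm t)
  rw [← hE, max_eq_left hta] at hF
  simpa using hF.of_local_left_inverse E.symm.continuous.continuousAt
    (inv_ne_zero (hv_pos _ hta).ne') (Eventually.of_forall E.apply_symm_apply)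

lemma travelTime_eq_sub_of_hasDerivWithinAt (hv : ContinuousOn v (Ici a))
    (hv_pos : ∀ x ∈ Ici a, 0 < v x) (hv_nonneg : ∀ x, 0 ≤ v x) {lam : ℝ → ℝ} {J : Set ℝ}
    {r₀ : ℝ} (hJmem : r₀ ∈ J) (hJsub : J ⊆ Ici r₀) (hJconn : J.OrdConnected)
    (hinit : lam r₀ = a) (hsol : ∀ r ∈ J, HasDerivWithinAt lam (v (lam r)) J r) :
    ∀ r ∈ J, travelTime v a (lam r) = r - r₀ := by
  have hmono : MonotoneOn lam J :=
    monotoneOn_of_hasDerivWithinAt_nonneg hJconn.convex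
      (fun r hr => (hsol r hr).continuousWithinAt)
      (fun r hr => (hsol r (interior_subset hr)).mono interior_subset)
      (fun r _ => hv_nonneg _)
  have hlam_ge : ∀ r ∈ J, a ≤ lam r := fun r hr => hinit ▸ hmono hJmem hr (hJsub hr)
  have hderiv : ∀ r ∈ J,
      HasDerivWithinAt (fun r => travelTime v a (lam r) - r) 0 J r := by
    intro r hr
    have h := ((hasDerivAt_travelTime hv hv_pos (lam r)).comp_hasDerivWithinAt r
      (hsol r hr)).sub (hasDerivWithinAt_id r J)
    rwa [max_eq_left (hlam_ge r hr), inv_mul_cancel₀ (hv_pos _ (hlam_ge r hr)).ne',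
      sub_self] at h
  intro r hr
  have h := Convex.norm_image_sub_le_of_norm_hasDerivWithin_le hderiv (fun _ _ => (norm_zero).le)
    hJconn.convex hJmem hr
  rw [zero_mul, norm_le_zero_iff, hinit, travelTime_self] at h
  linarith

lemma abs_inv_sub_inv_le {u w d : ℝ} (hu : 0 < u) (hd : 0 < d) (hdw : d ≤ w) :
    |u⁻¹ - w⁻¹| ≤ |w ^ 2 - u ^ 2| / (d * u ^ 2) := by
  have hw : 0 < w := hd.trans_le hdw
  rw [inv_sub_inv hu.ne' hw.ne', show w ^ 2 - u ^ 2 = (w - u) * (w + u) by ring, abs_div,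
    abs_of_pos (mul_pos hu hw), abs_mul, abs_of_pos (add_pos hw hu),
    div_le_div_iff₀ (by positivity) (by positivity), mul_assoc]
  exact mul_le_mul_of_nonneg_left
    (by nlinarith [mul_le_mul_of_nonneg_left hdw (sq_nonneg u), mul_pos hu (mul_pos hw hw)])
    (abs_nonneg _)

lemma exists_tendsto_log_sub_travelTime {C d : ℝ} (ha : 0 < a) (hv : ContinuousOn v (Ici a))
    (hd : 0 < d) (hvd : ∀ x ∈ Ici a, d ≤ v x) (hC : ∀ x ∈ Ici a, |v x ^ 2 - x ^ 2| ≤ C) :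
    ∃ l, Tendsto (fun u => log u - travelTime v a u) atTop (𝓝 l) := by
  have hφ := continuous_inv_comp_max hv fun x hx => hd.trans_le (hvd x hx)
  have hbound : ∀ s ∈ Ioi a, ‖s⁻¹ - (v (max s a))⁻¹‖ ≤ C / d * s ^ (-2 : ℝ) := by
    intro s hs
    have hs0 : 0 < s := ha.trans hs
    have hs' : s ∈ Ici a := Ioi_subset_Ici_self hs
    rw [max_eq_left hs.le, Real.norm_eq_abs, rpow_neg hs0.le, rpow_two]
    calc _ ≤ |v s ^ 2 - s ^ 2| / (d * s ^ 2) := abs_inv_sub_inv_le hs0 hd (hvd s hs')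
      _ ≤ C / (d * s ^ 2) := div_le_div_of_nonneg_right (hC s hs') (by positivity)
      _ = C / d * (s ^ 2)⁻¹ := by field_simp
  have hint : IntegrableOn (fun s => s⁻¹ - (v (max s a))⁻¹) (Ioi a) :=
    ((integrableOn_Ioi_rpow_of_lt (by norm_num) ha).const_mul (C / d)).mono'
      (((continuousOn_inv₀.mono fun s hs => (ha.trans hs).ne').sub
        hφ.continuousOn).aestronglyMeasurable measurableSet_Ioi)
      (ae_restrict_of_forall_mem measurableSet_Ioi hbound)
  refine ⟨log a + ∫ s in Ioi a, s⁻¹ - (v (max s a))⁻¹,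
    ((intervalIntegral_tendsto_integral_Ioi a hint tendsto_id).const_add (log a)).congr' ?_⟩
  filter_upwards [eventually_gt_atTop a] with u hu
  have hu0 : 0 < u := ha.trans hu
  rw [id, intervalIntegral.integral_sub
    (intervalIntegrable_inv_iff.2 (Or.inr (notMem_uIcc_of_lt ha hu0)))
    (hφ.intervalIntegrable _ _), integral_inv_of_pos ha hu0, log_div hu0.ne' ha.ne', travelTime]
  ring

lemma tendsto_travelTime_atTop {l : ℝ}
    (hl : Tendsto (fun u => log u - travelTime v a u) atTop (𝓝 l)) :
    Tendsto (travelTime v a) atTop atTop :=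
  (tendsto_log_atTop.atTop_add hl.neg).congr fun u => by ring

end TravelTime

theorem maximal_solution_eq_Ici_and_tendsto {v : ℝ → ℝ} {a C d r₀ : ℝ} {lam : ℝ → ℝ}
    {J : Set ℝ} (ha : 0 < a) (hv : ContinuousOn v (Ici a)) (hv_nonneg : ∀ x, 0 ≤ v x)
    (hd : 0 < d) (hvd : ∀ x ∈ Ici a, d ≤ v x) (hC : ∀ x ∈ Ici a, |v x ^ 2 - x ^ 2| ≤ C)
    (hJmem : r₀ ∈ J) (hJsub : J ⊆ Ici r₀) (hJconn : J.OrdConnected) (hinit : lam r₀ = a)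
    (hsol : ∀ r ∈ J, HasDerivWithinAt lam (v (lam r)) J r)
    (hmax : ∀ (lam' : ℝ → ℝ) (J' : Set ℝ), J ⊆ J' → J' ⊆ Ici r₀ → J'.OrdConnected →
      (∀ r ∈ J, lam' r = lam r) → (∀ r ∈ J', HasDerivWithinAt lam' (v (lam' r)) J' r) →
      J' = J) :
    J = Ici r₀ ∧ StrictMonoOn lam (Ici r₀) ∧ Tendsto lam atTop atTop ∧
      ∃ L, 0 < L ∧ Tendsto (fun r => lam r * exp (-r)) atTop (𝓝 L) := by
  have hv_pos : ∀ x ∈ Ici a, 0 < v x := fun x hx => hd.trans_le (hvd x hx)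
  obtain ⟨l, hl⟩ := exists_tendsto_log_sub_travelTime ha hv hd hvd hC
  obtain ⟨E, hE⟩ := exists_orderIso_travelTime hv hv_pos (tendsto_travelTime_atTop hl)
  set g : ℝ → ℝ := fun r => E.symm (r - r₀)
  have hEg : ∀ r, travelTime v a (g r) = r - r₀ := fun r => hE ▸ E.apply_symm_apply _
  have hlam_eq : ∀ r ∈ J, lam r = g r := fun r hr => E.eq_symm_apply.2 <|
    hE ▸ travelTime_eq_sub_of_hasDerivWithinAt hv hv_pos hv_nonneg hJmem hJsub hJconn hinit hsol
      r hr
  have hJ : J = Ici r₀ := (hmax g (Ici r₀) hJsub subset_rfl ordConnected_Ici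
    (fun r hr => (hlam_eq r hr).symm) fun r hr =>
      ((hasDerivAt_symm_of_coe_eq_travelTime hv hv_pos hE (sub_nonneg.2 hr)).comp_sub_const
        r r₀).hasDerivWithinAt).symm
  have hlam : EqOn lam g (Ici r₀) := hJ ▸ hlam_eq
  have hg_top : Tendsto g atTop atTop :=
    E.symm.tendsto_atTop.comp (tendsto_atTop_add_const_right _ (-r₀) tendsto_id)
  refine ⟨hJ, fun x hx y hy hxy => ?_, hg_top.congr' ?_, exp (l - r₀), exp_pos _, ?_⟩
  · rw [hlam hx, hlam hy]
    exact E.symm.strictMono (sub_lt_sub_right hxy r₀)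
  · filter_upwards [eventually_ge_atTop r₀] with r hr using (hlam hr).symm
  refine ((continuous_exp.tendsto _).comp ((hl.comp hg_top).sub_const r₀)).congr' ?_
  filter_upwards [eventually_ge_atTop r₀] with r hr
  have hg_pos : 0 < g r := ha.trans_le <| E.le_symm_apply.2 <| by
    rw [hE, travelTime_self]; exact sub_nonneg.2 hr
  change exp (log (g r) - travelTime v a (g r) - r₀) = lam r * exp (-r)
  rw [hEg, hlam hr, show log (g r) - (r - r₀) - r₀ = log (g r) + -r by ring, exp_add,
    exp_log hg_pos]

lemma zpow_le_zpow_of_nonpos {k : ℤ} (hk : k ≤ 0) {x y : ℝ} (hx : 0 < x) (hxy : x ≤ y) :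
    y ^ k ≤ x ^ k := by
  simpa only [rpow_intCast] using rpow_le_rpow_of_nonpos hx hxy (z := k) (by exact_mod_cast hk)

noncomputable def adsPotential (m : ℝ) (n : ℤ) (s : ℝ) : ℝ :=
  1 + s ^ 2 - m * s ^ (1 - n)

section AdsPotential

variable {m : ℝ} {n : ℤ}

lemma continuousOn_adsPotential : ContinuousOn (adsPotential m n) (Ioi 0) := by
  unfold adsPotential
  fun_prop (disch := exact fun x hx => Or.inl (ne_of_gt hx))

lemma strictMonoOn_adsPotential (hm : 0 ≤ m) (hn : 1 ≤ n) :
    StrictMonoOn (adsPotential m n) (Ioi 0) := by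
  intro x hx y _ hxy
  have hsq : x ^ 2 < y ^ 2 := pow_lt_pow_left₀ hxy (le_of_lt hx) two_ne_zero
  have hpow := mul_le_mul_of_nonneg_left (zpow_le_zpow_of_nonpos (sub_nonpos.2 hn) hx hxy.le) hm
  simp only [adsPotential]
  linarith

lemma abs_adsPotential_sub_sq_le (hm : 0 ≤ m) (hn : 1 ≤ n) {a x : ℝ} (ha : 0 < a)
    (hx : a ≤ x) : |adsPotential m n x - x ^ 2| ≤ 1 + m * a ^ (1 - n) := by
  have hpow_nonneg : 0 ≤ m * x ^ (1 - n) := mul_nonneg hm (zpow_nonneg (ha.le.trans hx) _)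
  have hpow := mul_le_mul_of_nonneg_left (zpow_le_zpow_of_nonpos (sub_nonpos.2 hn) ha hx) hm
  rw [adsPotential, abs_le]
  constructor <;> linarith

end AdsPotential

/-- Any maximal (forward) solution of the AdS-Schwarzschild ODE
`λ' = √(1 + λ² - m λ^(1-n))` with initial value `λ(r₀) = a > s₀` is defined
on all of `[r₀, ∞)`, is strictly increasing there, tends to `∞`, and
`λ(r) e^(-r)` converges to a positive limit. -/
theorem stmt_1 (m : ℝ) (hm : 0 < m) (n : ℤ) (hn : 2 ≤ n)
    (s₀ : ℝ) (hs₀ : 0 < s₀) (hroot : 1 + s₀ ^ 2 - m * s₀ ^ (1 - n) = 0)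
    (r₀ a : ℝ) (ha : s₀ < a)
    (lam : ℝ → ℝ) (J : Set ℝ)
    (hJmem : r₀ ∈ J) (hJsub : J ⊆ Set.Ici r₀) (hJconn : J.OrdConnected)
    (hinit : lam r₀ = a)
    (hsol : ∀ r ∈ J,
      HasDerivWithinAt lam (Real.sqrt (1 + lam r ^ 2 - m * lam r ^ (1 - n))) J r)
    (hmax : ∀ (lam' : ℝ → ℝ) (J' : Set ℝ), J ⊆ J' → J' ⊆ Set.Ici r₀ →
      J'.OrdConnected → (∀ r ∈ J, lam' r = lam r) →
      (∀ r ∈ J',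
        HasDerivWithinAt lam' (Real.sqrt (1 + lam' r ^ 2 - m * lam' r ^ (1 - n))) J' r) →
      J' = J) :
    J = Set.Ici r₀ ∧ StrictMonoOn lam (Set.Ici r₀) ∧
      Filter.Tendsto lam Filter.atTop Filter.atTop ∧
      ∃ L : ℝ, 0 < L ∧
        Filter.Tendsto (fun r => lam r * Real.exp (-r)) Filter.atTop (nhds L) := by
  have ha0 : 0 < a := hs₀.trans ha
  have hn1 : 1 ≤ n := by omega
  have hpot_s₀ : adsPotential m n s₀ = 0 := hroot
  have hpot_mono := strictMonoOn_adsPotential hm.le hn1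
  have hpot_a : 0 < adsPotential m n a := hpot_s₀ ▸ hpot_mono hs₀ ha0 ha
  have hpot_le : ∀ x ∈ Ici a, adsPotential m n a ≤ adsPotential m n x := fun x hx =>
    hpot_mono.monotoneOn ha0 (ha0.trans_le hx) hx
  refine maximal_solution_eq_Ici_and_tendsto (v := fun x => √(adsPotential m n x))
    (C := 1 + m * a ^ (1 - n)) ha0
    (continuousOn_adsPotential.mono fun x hx => ha0.trans_le hx).sqrt (fun _ => sqrt_nonneg _)
    (sqrt_pos.2 hpot_a) (fun x hx => sqrt_le_sqrt (hpot_le x hx)) (fun x hx => ?_)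
    hJmem hJsub hJconn hinit hsol hmax
  rw [sq_sqrt (hpot_a.le.trans (hpot_le x hx))]
  exact abs_adsPotential_sub_sq_le hm.le hn1 ha0 hx
end

section
/- Let f : [0, ∞) → ℝ be locally Lipschitz and let D ⊆ [0, ∞) be its set of points of differentiability. Suppose that for every ε > 0 there exist T_ε ≥ 0 and δ_ε > 0 such that every t ∈ D with t ≥ T_ε and f(t) ≥ ε satisfies f'(t) ≤ −δ_ε. Then limsup_{t → ∞} f(t) ≤ 0. -/
/-!
A locally Lipschitz function is absolutely continuous on compact intervals, so it is the integral
of its a.e. derivative. Hence on any interval beyond `T_ε` on whose interior `f > ε`, `f` decreases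
at rate at least `δ_ε`. This forces `f` below `ε` within time `(f(T_ε) - ε) / δ_ε`, and `f` can
never climb back above `ε`: if `a` is the last time before `t` at which `f ≤ ε`, then `f > ε` on
`(a, t)`, so `f t ≤ f a ≤ ε`.
-/

open Set Filter MeasureTheory

theorem AbsolutelyContinuousOnInterval.sub_le_mul_of_deriv_le {f : ℝ → ℝ} {a b C : ℝ}
    (hf : AbsolutelyContinuousOnInterval f a b) (hab : a ≤ b)
    (hC : ∀ t ∈ Ioo a b, DifferentiableAt ℝ f t → deriv f t ≤ C) :
    f b - f a ≤ C * (b - a) := by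
  have hderiv : deriv f ≤ᵐ[volume.restrict (Icc a b)] fun _ ↦ C := by
    rw [← Measure.restrict_congr_set Ioo_ae_eq_Icc]
    filter_upwards [ae_restrict_mem measurableSet_Ioo, ae_restrict_of_ae hf.ae_differentiableAt]
      with t ht hdiff
    exact hC t ht (hdiff (uIcc_of_le hab ▸ Ioo_subset_Icc_self ht))
  calc f b - f a = ∫ t in a..b, deriv f t := hf.integral_deriv_eq_sub.symm
    _ ≤ ∫ _ in a..b, C :=
      intervalIntegral.integral_mono_ae_restrict hab hf.intervalIntegrable_deriv
        intervalIntegrable_const hderiv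
    _ = C * (b - a) := by rw [intervalIntegral.integral_const, smul_eq_mul, mul_comm]

theorem LocallyLipschitzOn.absolutelyContinuousOnInterval {f : ℝ → ℝ} {s : Set ℝ} {a b : ℝ}
    (hf : LocallyLipschitzOn s f) (hab : uIcc a b ⊆ s) : AbsolutelyContinuousOnInterval f a b :=
  let ⟨_, hK⟩ := (hf.mono hab).exists_lipschitzOnWith_of_compact isCompact_uIcc
  hK.absolutelyContinuousOnInterval

-- The bound `0` cannot be replaced by an arbitrary `c`: the `limsup` of a real function that is
-- not cobounded (e.g. one tending to `-∞`) is the junk value `0`.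
lemma Real.limsup_nonpos_of_forall_pos_eventually_le {ι : Type*} {l : Filter ι} {u : ι → ℝ}
    (h : ∀ ε > 0, ∀ᶠ i in l, u i ≤ ε) : limsup u l ≤ 0 := by
  by_cases hu : IsCoboundedUnder (· ≤ ·) l u
  · exact le_of_forall_pos_le_add fun ε hε ↦ by simpa using limsup_le_of_le hu (h ε hε)
  · rw [Real.limsup_of_not_isCoboundedUnder hu]

section Barrier

variable {f : ℝ → ℝ} {T ε δ : ℝ} (hf : LocallyLipschitzOn (Ici T) f)
  (hd : ∀ t, T < t → DifferentiableAt ℝ f t → ε < f t → deriv f t ≤ -δ)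
include hf hd

lemma barrier_sub_le {a b : ℝ} (hTa : T ≤ a) (hab : a ≤ b) (hε : ∀ t ∈ Ioo a b, ε < f t) :
    f b - f a ≤ -δ * (b - a) :=
  have hsub : uIcc a b ⊆ Ici T := by rw [uIcc_of_le hab, Icc_subset_Ici_iff hab]; exact hTa
  (hf.absolutelyContinuousOnInterval hsub).sub_le_mul_of_deriv_le hab
    fun t ht hdiff ↦ hd t (hTa.trans_lt ht.1) hdiff (hε t ht)

lemma barrier_le_of_le (hδ : 0 ≤ δ) {t₀ t : ℝ} (hT : T ≤ t₀) (h₀ : f t₀ ≤ ε) (ht : t₀ ≤ t) :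
    f t ≤ ε := by
  let S := Icc t₀ t ∩ {s | f s ≤ ε}
  have hS : IsClosed S :=
    (hf.continuousOn.mono ((Icc_subset_Ici_iff ht).2 hT)).preimage_isClosed_of_isClosed
      isClosed_Icc isClosed_Iic
  have hS_bdd : BddAbove S := ⟨t, fun s hs ↦ hs.1.2⟩
  obtain ⟨⟨hta, hat⟩, hfa⟩ : sSup S ∈ S := hS.csSup_mem ⟨t₀, ⟨le_rfl, ht⟩, h₀⟩ hS_bdd
  have hε : ∀ s ∈ Ioo (sSup S) t, ε < f s := fun s hs ↦ by
    by_contra! hfs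
    exact (le_csSup hS_bdd ⟨⟨hta.trans hs.1.le, hs.2.le⟩, hfs⟩).not_gt hs.1
  have := barrier_sub_le hf hd (hT.trans hta) hat hε
  linarith [mul_nonneg hδ (sub_nonneg.2 hat), hfa.out]

lemma barrier_exists_le (hδ : 0 < δ) : ∃ t₀, T ≤ t₀ ∧ f t₀ ≤ ε := by
  by_contra! hgt
  let t := T + (f T - ε) / δ
  have hTt : T ≤ t := le_add_of_nonneg_right (div_nonneg (sub_nonneg.2 (hgt T le_rfl).le) hδ.le)
  have hdecay := barrier_sub_le hf hd le_rfl hTt fun s hs ↦ hgt s hs.1.le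
  have hdrop : -δ * (t - T) = ε - f T := by simp only [t]; field_simp; ring
  linarith [hgt t hTt]

end Barrier

/-- Barrier lemma: if `f` is locally Lipschitz on `[0, ∞)` and for every `ε > 0`
there are `T_ε ≥ 0`, `δ_ε > 0` such that at every point of differentiability
`t ≥ T_ε` with `f(t) ≥ ε` one has `f'(t) ≤ -δ_ε`, then `limsup_{t→∞} f(t) ≤ 0`. -/
theorem stmt_6 (f : ℝ → ℝ)
    (hf : LocallyLipschitzOn (Set.Ici (0 : ℝ)) f)
    (h : ∀ ε : ℝ, 0 < ε → ∃ T : ℝ, 0 ≤ T ∧ ∃ δ : ℝ, 0 < δ ∧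
      ∀ t : ℝ, 0 ≤ t → DifferentiableAt ℝ f t → T ≤ t → ε ≤ f t →
        deriv f t ≤ -δ) :
    Filter.limsup f Filter.atTop ≤ 0 := by
  refine Real.limsup_nonpos_of_forall_pos_eventually_le fun ε hε ↦ ?_
  obtain ⟨T, hT, δ, hδ, hd⟩ := h ε hε
  have hfT : LocallyLipschitzOn (Ici T) f := hf.mono (Ici_subset_Ici.2 hT)
  have hdT : ∀ t, T < t → DifferentiableAt ℝ f t → ε < f t → deriv f t ≤ -δ :=
    fun t ht hdiff hft ↦ hd t (hT.trans ht.le) hdiff ht.le hft.le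
  obtain ⟨t₀, hTt₀, hft₀⟩ := barrier_exists_le hfT hdT hδ
  exact eventually_atTop.2 ⟨t₀, fun t ht ↦ barrier_le_of_le hfT hdT hδ.le hTt₀ hft₀ ht⟩
end

section
/- Let n ≥ 1 and let Γ ⊊ ℝⁿ be an open convex cone (i.e., t·x ∈ Γ for all t > 0 and x ∈ Γ) that is invariant under permutations of the coordinates and contains the positive cone Γ₊ = {κ ∈ ℝⁿ : κ_i > 0 for all 1 ≤ i ≤ n}. Then Γ is contained in the open half-space {κ ∈ ℝⁿ : κ₁ + κ₂ + … + κ_n > 0}. -/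
/-- A proper, open, convex, permutation-invariant cone `Γ ⊊ ℝⁿ` containing the
positive cone `Γ₊` is contained in the open half-space `{κ : ∑ᵢ κᵢ > 0}`. -/
theorem stmt_12 (n : ℕ) (hn : 1 ≤ n)
    (Γ : Set (Fin n → ℝ)) (hopen : IsOpen Γ) (hconv : Convex ℝ Γ)
    (hcone : ∀ t : ℝ, 0 < t → ∀ x ∈ Γ, t • x ∈ Γ)
    (hsym : ∀ σ : Equiv.Perm (Fin n), ∀ κ ∈ Γ, (fun i => κ (σ i)) ∈ Γ)
    (hproper : Γ ≠ Set.univ)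
    (hpos : {κ : Fin n → ℝ | ∀ i, 0 < κ i} ⊆ Γ) :
    Γ ⊆ {κ : Fin n → ℝ | 0 < ∑ i, κ i} := by
  have hn0 : (0:ℝ) < n := by positivity
  have : NeZero n := ⟨by omega⟩
  intro κ hκ
  by_contra hsum
  simp only [Set.mem_setOf_eq, not_lt] at hsum
  -- Step 1: perturb κ to κ' with strictly negative sum, still in Γ
  obtain ⟨ε, hε, hball⟩ := Metric.isOpen_iff.mp hopen κ hκ
  set δ : ℝ := ε / 2 with hδdef
  have hδ : 0 < δ := by positivity
  set κ' : Fin n → ℝ := fun i => κ i - δ with hκ'def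
  have hκ' : κ' ∈ Γ := by
    apply hball
    rw [Metric.mem_ball, dist_pi_lt_iff hε]
    intro i
    simp only [hκ'def, Real.dist_eq]
    rw [show κ i - δ - κ i = -δ by ring, abs_neg, abs_of_pos hδ]
    exact half_lt_self hε
  have hsum' : ∑ j, κ' j < 0 := by
    simp only [hκ'def, Finset.sum_sub_distrib, Finset.sum_const, Finset.card_univ,
      Fintype.card_fin, nsmul_eq_mul]
    have : (0:ℝ) < n * δ := by positivity
    linarith
  -- Step 2: average over cyclic shifts lies in Γ
  set c : ℝ := (∑ j, κ' j) / n with hcdef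
  have hc : c < 0 := div_neg_of_neg_of_pos hsum' hn0
  have hshift : ∀ k : Fin n, (fun i => κ' (i + k)) ∈ Γ := fun k =>
    hsym (Equiv.addRight k) κ' hκ'
  have hvΓ : (fun _ : Fin n => c) ∈ Γ := by
    have hmem := hconv.sum_mem (t := (Finset.univ : Finset (Fin n)))
      (w := fun _ => (1:ℝ)/n) (z := fun k => fun i => κ' (i + k))
      (fun k _ => by positivity)
      (by simp [Finset.sum_const, Finset.card_univ])
      (fun k _ => hshift k)
    have heq : (∑ k : Fin n, ((1:ℝ)/n) • (fun i => κ' (i + k))) = fun _ : Fin n => c := by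
      funext i
      rw [Finset.sum_apply]
      simp only [Pi.smul_apply, smul_eq_mul]
      rw [← Finset.mul_sum]
      have : ∑ k : Fin n, κ' (i + k) = ∑ j, κ' j := Equiv.sum_comp (Equiv.addLeft i) κ'
      rw [this, hcdef]
      ring
    rwa [heq] at hmem
  -- Step 3: Γ = univ, contradiction
  apply hproper
  ext x
  simp only [Set.mem_univ, iff_true]
  set t : ℝ := (2 * ‖x‖ + 1) / (-c) with htdef
  have ht : 0 < t := by
    apply div_pos
    · positivity
    · linarith
  have htc : t * (-c) = 2 * ‖x‖ + 1 := by
    rw [htdef]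
    exact div_mul_cancel₀ _ (by linarith : -c ≠ 0)
  have hyΓ : (fun i => 2 * x i - t * c) ∈ Γ := by
    apply hpos
    intro i
    simp only [Set.mem_setOf_eq]
    have hx : |x i| ≤ ‖x‖ := by
      simpa using norm_le_pi_norm x i
    have : -(t * c) = 2 * ‖x‖ + 1 := by rw [← htc]; ring
    have hxi : -‖x‖ ≤ x i := by
      cases abs_le.mp hx with
      | intro h1 h2 => linarith
    linarith
  have hwΓ : (fun _ : Fin n => t * c) ∈ Γ := by
    have := hcone t ht _ hvΓ
    simpa [Pi.smul_def] using this
  have hx := hconv hyΓ hwΓ (by norm_num : (0:ℝ) ≤ 1/2) (by norm_num : (0:ℝ) ≤ 1/2)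
    (by norm_num)
  have : (1/2 : ℝ) • (fun i => 2 * x i - t * c) + (1/2 : ℝ) • (fun _ : Fin n => t * c) = x := by
    funext i
    simp only [Pi.add_apply, Pi.smul_apply, smul_eq_mul]
    ring
  rwa [this] at hx
end
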